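/- arXiv:2109.14412 — 5 statements merged into one kernel-verified Lean document; each statement's English description precedes it below -/
import Mathlib

section
/- Let d ≥ 1, let Λ be a nonempty compact subset of ℝ^d, let f, g : Λ → ℝ be continuous, and let π be a Borel probability measure on Λ whose support is all of Λ (every nonempty relatively open subset of Λ has positive π-measure). Then there exist λ, λ' ∈ Λ (possibly λ = λ') and p ∈ (0,1) such that p·f(λ) + (1−p)·f(λ') ≤ ∫_Λ f dπ and p·g(λ) + (1−p)·g(λ') ≤ ∫_Λ g dπ. -/
open MeasureTheory Set

/-!
Subtract the integrals, so that `F = f - ∫ f` and `G = g - ∫ g` have mean zero. For every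
`t ∈ [0, 1]` the mean of `t F + (1 - t) G` is zero, so it is nonpositive at some point `x`, and
there `F x ≤ 0` or `G x ≤ 0`. This covers `[0, 1]` by two closed sets (closed because `Λ` is
compact) containing `1` and `0` respectively; by connectedness they share some `t`, with witnesses
`x` (where `F x ≤ 0`) and `y` (where `G y ≤ 0`). The segment from `(F x, G x)` to `(F y, G y)`
then meets the closed negative quadrant.
-/

section ConvexPair

variable {X : Type*} {F G : X → ℝ}

lemma exists_convex_pair_nonpos_of_weighted_nonpos {t : ℝ} (ht : t ∈ Icc (0 : ℝ) 1) {x y : X}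
    (hFx : F x ≤ 0) (hx : t * F x + (1 - t) * G x ≤ 0)
    (hGy : G y ≤ 0) (hy : t * F y + (1 - t) * G y ≤ 0) :
    ∃ (l l' : X) (p : ℝ), p ∈ Ioo (0 : ℝ) 1 ∧
      p * F l + (1 - p) * F l' ≤ 0 ∧ p * G l + (1 - p) * G l' ≤ 0 := by
  have half : (1 / 2 : ℝ) ∈ Ioo (0 : ℝ) 1 := by norm_num
  by_cases hGx : G x ≤ 0
  · exact ⟨x, x, 1 / 2, half, by linarith, by linarith⟩
  by_cases hFy : F y ≤ 0
  · exact ⟨y, y, 1 / 2, half, by linarith, by linarith⟩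
  push Not at hGx hFy
  obtain ⟨ht0, ht1⟩ := ht
  have ht0 : 0 < t := ht0.lt_of_ne <| by rintro rfl; linarith
  have ht1 : t < 1 := ht1.lt_of_ne <| by rintro rfl; linarith
  have hFx : F x < 0 := by nlinarith [mul_pos (sub_pos.2 ht1) hGx]
  have hcross : F y * G x ≤ F x * G y := by
    have h1 : (1 - t) * G x ≤ t * -F x := by linarith
    have h2 : t * F y ≤ (1 - t) * -G y := by linarith
    have h12 := mul_le_mul h1 h2 (by positivity) (mul_nonneg ht0.le (by linarith))
    exact le_of_mul_le_mul_left (a := t * (1 - t)) (by linarith) (by nlinarith)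
  have hD : 0 < F y - F x := by linarith
  -- the weight that puts the combination on the axis `F = 0`
  set p := F y / (F y - F x)
  have hp : p ∈ Ioo (0 : ℝ) 1 := ⟨by positivity, (div_lt_one hD).mpr (by linarith)⟩
  have hFp : p * F x + (1 - p) * F y = 0 := by
    simp only [p]
    field_simp
    ring
  have hGp : p * G x + (1 - p) * G y = (F y * G x - F x * G y) / (F y - F x) := by
    simp only [p]
    field_simp
    ring
  exact ⟨x, y, p, hp, hFp.le, hGp ▸ div_nonpos_of_nonpos_of_nonneg (by linarith) hD.le⟩

variable [TopologicalSpace X] [CompactSpace X]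

lemma isClosed_setOf_exists_weighted_nonpos {H : X → ℝ} (hF : Continuous F)
    (hG : Continuous G) (hH : Continuous H) :
    IsClosed {t : ℝ | ∃ x, H x ≤ 0 ∧ t * F x + (1 - t) * G x ≤ 0} := by
  have hS : IsClosed ({q : ℝ × X | H q.2 ≤ 0} ∩
      {q | q.1 * F q.2 + (1 - q.1) * G q.2 ≤ 0}) :=
    (isClosed_le (by fun_prop) continuous_const).inter
      (isClosed_le (by fun_prop) continuous_const)
  convert isClosedMap_fst_of_compactSpace _ hS using 1
  ext t
  simp

lemma exists_convex_pair_nonpos (hF : Continuous F) (hG : Continuous G)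
    (h : ∀ t ∈ Icc (0 : ℝ) 1, ∃ x, t * F x + (1 - t) * G x ≤ 0) :
    ∃ (l l' : X) (p : ℝ), p ∈ Ioo (0 : ℝ) 1 ∧
      p * F l + (1 - p) * F l' ≤ 0 ∧ p * G l + (1 - p) * G l' ≤ 0 := by
  have hcover : Icc (0 : ℝ) 1 ⊆ {t | ∃ x, F x ≤ 0 ∧ t * F x + (1 - t) * G x ≤ 0} ∪
      {t | ∃ x, G x ≤ 0 ∧ t * F x + (1 - t) * G x ≤ 0} := by
    intro t ht
    obtain ⟨x, hx⟩ := h t ht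
    rcases le_or_gt (F x) 0 with hFx | hFx
    · exact .inl ⟨x, hFx, hx⟩
    refine .inr ⟨x, ?_, hx⟩
    rcases ht.1.eq_or_lt with rfl | ht0
    · simpa using hx
    · nlinarith [mul_pos ht0 hFx, ht.2]
  obtain ⟨t, ht, ⟨x, hFx, hx⟩, ⟨y, hGy, hy⟩⟩ := isPreconnected_closed_iff.mp isPreconnected_Icc
    _ _ (isClosed_setOf_exists_weighted_nonpos hF hG hF)
    (isClosed_setOf_exists_weighted_nonpos hF hG hG) hcover
    (by obtain ⟨x, hx⟩ := h 1 (by simp); exact ⟨1, by simp, x, by simpa using hx, hx⟩)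
    (by obtain ⟨y, hy⟩ := h 0 (by simp); exact ⟨0, by simp, y, by simpa using hy, hy⟩)
  exact exists_convex_pair_nonpos_of_weighted_nonpos ht hFx hx hGy hy

end ConvexPair

theorem exists_pair_convex_comb_le_integral_general
    (d : ℕ) (Λ : Set (EuclideanSpace ℝ (Fin d)))
    (hΛc : IsCompact Λ)
    (f g : Λ → ℝ) (hf : Continuous f) (hg : Continuous g)
    (π : Measure Λ) [IsProbabilityMeasure π] :
    ∃ (l l' : Λ) (p : ℝ), p ∈ Set.Ioo (0 : ℝ) 1 ∧
      p * f l + (1 - p) * f l' ≤ ∫ x, f x ∂π ∧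
      p * g l + (1 - p) * g l' ≤ ∫ x, g x ∂π := by
  have : CompactSpace Λ := isCompact_iff_compactSpace.mp hΛc
  have hfi : Integrable f π := hf.integrable_of_hasCompactSupport (.of_compactSpace f)
  have hgi : Integrable g π := hg.integrable_of_hasCompactSupport (.of_compactSpace g)
  have hweighted : ∀ t ∈ Icc (0 : ℝ) 1,
      ∃ x, t * (f x - ∫ x, f x ∂π) + (1 - t) * (g x - ∫ x, g x ∂π) ≤ 0 := by
    intro t _
    obtain ⟨x, hx⟩ := exists_le_integral (μ := π) (f := fun x ↦ t * f x + (1 - t) * g x)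
      ((hfi.const_mul t).add (hgi.const_mul (1 - t)))
    rw [integral_add (hfi.const_mul t) (hgi.const_mul (1 - t)), integral_const_mul,
      integral_const_mul] at hx
    exact ⟨x, by linarith⟩
  obtain ⟨l, l', p, hp, hfl, hgl⟩ :=
    exists_convex_pair_nonpos (by fun_prop) (by fun_prop) hweighted
  exact ⟨l, l', p, hp, by linarith, by linarith⟩

/-- For a nonempty compact `Λ ⊆ ℝ^d`, continuous `f g : Λ → ℝ`, and a Borel
probability measure `π` on `Λ` with full support, there exist `λ, λ' ∈ Λ` and `p ∈ (0,1)`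
such that both convex combinations are below the respective integrals. -/
theorem exists_pair_convex_comb_le_integral
    (d : ℕ) (hd : 1 ≤ d) (Λ : Set (EuclideanSpace ℝ (Fin d)))
    (hΛne : Λ.Nonempty) (hΛc : IsCompact Λ)
    (f g : Λ → ℝ) (hf : Continuous f) (hg : Continuous g)
    (π : Measure Λ) [IsProbabilityMeasure π]
    (hsupp : ∀ U : Set Λ, IsOpen U → U.Nonempty → 0 < π U) :
    ∃ (l l' : Λ) (p : ℝ), p ∈ Set.Ioo (0 : ℝ) 1 ∧
      p * f l + (1 - p) * f l' ≤ ∫ x, f x ∂π ∧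
      p * g l + (1 - p) * g l' ≤ ∫ x, g x ∂π :=
  exists_pair_convex_comb_le_integral_general d Λ hΛc f g hf hg π
end

section
/- Let d ≥ 1, let Λ be a nonempty compact subset of ℝ^d, let f, g : Λ → ℝ be continuous, and let π be a Borel probability measure on Λ whose support is all of Λ. Assume ∫_Λ f dπ = ∫_Λ g dπ = 0 and that there is no λ ∈ Λ with both f(λ) ≤ 0 and g(λ) ≤ 0. Then there exist λ, λ' ∈ Λ with f(λ) ≤ 0, g(λ') ≤ 0, and f(λ)·g(λ') − f(λ')·g(λ) ≥ 0. -/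
/-!
On the compact set `{f ≤ 0}`, nonempty since `∫ f = 0`, we have `g > 0`, so `f / g` attains
its minimum there at some `x₀`. Then `h := g x₀ • f - f x₀ • g` is nonnegative wherever `g > 0`, and `∫ h = 0`. A continuous
function with zero integral against a measure of full support cannot be positive on the
nonempty set `{g ≤ 0}` while nonnegative off it, so `h y ≤ 0` for some `y` with `g y ≤ 0`;
the pair `(x₀, y)` then satisfies the conclusion, since the determinant equals `-h y`.
-/

open MeasureTheory

section FullSupport

variable {X : Type*} [TopologicalSpace X] [CompactSpace X] [MeasurableSpace X]
  [OpensMeasurableSpace X] {μ : Measure X} [IsFiniteMeasure μ] [μ.IsOpenPosMeasure]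

theorem Continuous.eq_zero_of_integral_eq_zero_of_nonneg {h : X → ℝ} (hc : Continuous h)
    (h0 : 0 ≤ h) (hint : ∫ x, h x ∂μ = 0) : h = 0 := by
  have hi : Integrable h μ := hc.integrable_of_hasCompactSupport (.of_compactSpace h)
  exact (hc.ae_eq_iff_eq μ continuous_const).mp ((integral_eq_zero_iff_of_nonneg h0 hi).mp hint)

theorem Continuous.exists_mem_nonpos_of_integral_eq_zero {h : X → ℝ} (hc : Continuous h)
    (hint : ∫ x, h x ∂μ = 0) {S : Set X} (hS : S.Nonempty) (hnonneg : ∀ x ∉ S, 0 ≤ h x) :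
    ∃ y ∈ S, h y ≤ 0 := by
  by_contra! hpos
  have h0 : 0 ≤ h := fun x => by
    by_cases hx : x ∈ S
    · exact (hpos x hx).le
    · exact hnonneg x hx
  obtain ⟨y, hy⟩ := hS
  exact (hpos y hy).ne' (congrFun (hc.eq_zero_of_integral_eq_zero_of_nonneg h0 hint) y)

end FullSupport

theorem exists_forall_cross_mul_le_of_pos_on_nonpos {X : Type*} [TopologicalSpace X]
    [CompactSpace X] {f g : X → ℝ} (hf : Continuous f) (hg : Continuous g)
    (hA : ∃ x, f x ≤ 0) (hpos : ∀ x, f x ≤ 0 → 0 < g x) :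
    ∃ x₀, f x₀ ≤ 0 ∧ ∀ x, 0 < g x → f x₀ * g x ≤ f x * g x₀ := by
  obtain ⟨x₀, hx₀, hmin⟩ := (isClosed_le hf continuous_const).isCompact.exists_isMinOn hA
    (hf.continuousOn.div hg.continuousOn fun x hx => (hpos x hx).ne')
  refine ⟨x₀, hx₀, fun x hgx => ?_⟩
  by_cases hfx : f x ≤ 0
  · exact (div_le_div_iff₀ (hpos x₀ hx₀) hgx).mp (hmin hfx)
  · exact (mul_nonpos_of_nonpos_of_nonneg hx₀ hgx.le).trans
      (mul_nonneg (not_le.mp hfx).le (hpos x₀ hx₀).le)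

theorem exists_pair_det_nonneg_general
    (d : ℕ) (Λ : Set (EuclideanSpace ℝ (Fin d)))
    (hΛc : IsCompact Λ)
    (f g : Λ → ℝ) (hf : Continuous f) (hg : Continuous g)
    (π : Measure Λ) [IsProbabilityMeasure π]
    (hsupp : ∀ U : Set Λ, IsOpen U → U.Nonempty → 0 < π U)
    (hf0 : ∫ x, f x ∂π = 0) (hg0 : ∫ x, g x ∂π = 0)
    (hno : ¬ ∃ l : Λ, f l ≤ 0 ∧ g l ≤ 0) :
    ∃ (l l' : Λ), f l ≤ 0 ∧ g l' ≤ 0 ∧ f l * g l' - f l' * g l ≥ 0 := by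
  have : CompactSpace Λ := isCompact_iff_compactSpace.mp hΛc
  have : Nonempty Λ := nonempty_of_isProbabilityMeasure π
  have : π.IsOpenPosMeasure := ⟨fun U hU hne => (hsupp U hU hne).ne'⟩
  push Not at hno
  have hA : ∃ x, f x ≤ 0 := by
    simpa using hf.exists_mem_nonpos_of_integral_eq_zero hf0 Set.univ_nonempty (by simp)
  have hB : ∃ y, g y ≤ 0 := by
    simpa using hg.exists_mem_nonpos_of_integral_eq_zero hg0 Set.univ_nonempty (by simp)
  obtain ⟨x₀, hx₀, hmin⟩ := exists_forall_cross_mul_le_of_pos_on_nonpos hf hg hA hno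
  have hint : ∫ x, (g x₀ * f x - f x₀ * g x) ∂π = 0 := by
    have hi : ∀ {k : Λ → ℝ}, Continuous k → Integrable k π :=
      fun hk => hk.integrable_of_hasCompactSupport (.of_compactSpace _)
    rw [integral_sub ((hi hf).const_mul _) ((hi hg).const_mul _), integral_const_mul,
      integral_const_mul, hf0, hg0]
    ring
  have hc : Continuous fun x => g x₀ * f x - f x₀ * g x := by fun_prop
  obtain ⟨y, hy, hhy⟩ := hc.exists_mem_nonpos_of_integral_eq_zero hint hB fun x hx => by
    have := hmin x (lt_of_not_ge hx)
    linarith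
  exact ⟨x₀, y, hx₀, hy, by linarith⟩

/-- With centred integrals and no common nonpositive point, there exist
`λ` with `f λ ≤ 0` and `λ'` with `g λ' ≤ 0` such that `f λ * g λ' - f λ' * g λ ≥ 0`. -/
theorem exists_pair_det_nonneg
    (d : ℕ) (hd : 1 ≤ d) (Λ : Set (EuclideanSpace ℝ (Fin d)))
    (hΛne : Λ.Nonempty) (hΛc : IsCompact Λ)
    (f g : Λ → ℝ) (hf : Continuous f) (hg : Continuous g)
    (π : Measure Λ) [IsProbabilityMeasure π]
    (hsupp : ∀ U : Set Λ, IsOpen U → U.Nonempty → 0 < π U)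
    (hf0 : ∫ x, f x ∂π = 0) (hg0 : ∫ x, g x ∂π = 0)
    (hno : ¬ ∃ l : Λ, f l ≤ 0 ∧ g l ≤ 0) :
    ∃ (l l' : Λ), f l ≤ 0 ∧ g l' ≤ 0 ∧ f l * g l' - f l' * g l ≥ 0 :=
  exists_pair_det_nonneg_general d Λ hΛc f g hf hg π hsupp hf0 hg0 hno
end

section
/- Fix d ≥ 1, x_max > 0, and loss parameters l01, l11 ∈ ℝ with 0 ≤ l11 < l01. Set c = l01 − l11, l_max = max(1, c), and let Θ = {θ ∈ ℝ^d : ‖θ‖₁ ≤ 1} be the closed ℓ1 unit ball. Then for every ε with 0 < ε < min(1, c) and ε ≤ 3·l_max·x_max, there exists a finite partition {Θ_1, …, Θ_K} of Θ with K ≤ (3·l_max·x_max/ε)^d such that for every k ∈ {1,…,K}, all θ, θ' ∈ Θ_k and every x ∈ ℝ^d with ‖x‖_∞ ≤ x_max, the distortion rate satisfies d(θ, θ'; x) ≤ ε. -/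
/-- The logistic (sigmoid) function `σ(z) = 1/(1+e^{-z})`. -/
noncomputable def logistic (z : ℝ) : ℝ := 1 / (1 + Real.exp (-z))

/-- Expected loss of label `a ∈ {0,1}` under parameter `θ` and context `x`:
`μ(0,θ;x) = l01·σ(xᵀθ)` and `μ(1,θ;x) = 1 + (l11−1)·σ(xᵀθ)`. -/
noncomputable def expLoss {d : ℕ} (l01 l11 : ℝ) (a : Fin 2) (θ x : Fin d → ℝ) : ℝ :=
  if a = 0 then l01 * logistic (∑ i, x i * θ i)
  else 1 + (l11 - 1) * logistic (∑ i, x i * θ i)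

/-- The optimal action: `1` if `μ(1,θ;x) ≤ μ(0,θ;x)`, else `0`. -/
noncomputable def optAct {d : ℕ} (l01 l11 : ℝ) (θ x : Fin d → ℝ) : Fin 2 :=
  if expLoss l01 l11 1 θ x ≤ expLoss l01 l11 0 θ x then 1 else 0

/-- The distortion rate `d(θ,θ';x) = μ(α(θ;x),θ';x) − μ(α(θ';x),θ';x)`. -/
noncomputable def distRate {d : ℕ} (l01 l11 : ℝ) (θ θ' x : Fin d → ℝ) : ℝ :=
  expLoss l01 l11 (optAct l01 l11 θ x) θ' x - expLoss l01 l11 (optAct l01 l11 θ' x) θ' x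

/-!
Two parameters θ, θ' lead to different optimal actions at `x` only if the loss gap
`μ(1, ·; x) - μ(0, ·; x) = 1 - (c + 1) σ(xᵀ·)` changes sign between them, so the distortion rate is
at most `(c + 1) |σ(xᵀθ) - σ(xᵀθ')| ≤ (c + 1) / 4 · x_max ‖θ - θ'‖₁`, as `σ` is `1/4`-Lipschitz.
It thus suffices to partition `Θ` into pieces of ℓ1-balls of radius `r = ε / (l_max x_max)`.
A maximal `r`-separated subset of `Θ` is an `r`-net, and comparing the volume of the disjoint balls
of radius `r / 2` around its points with that of the ball of radius `1 + r / 2` bounds its size by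
`(1 + 2 / r)^d ≤ (3 / r)^d` when `r ≤ 1`; when `r > 1` a single ball suffices.
-/

open MeasureTheory Metric Module Set Function
open scoped NNReal

theorem Real.lipschitzWith_sigmoid : LipschitzWith 4⁻¹ Real.sigmoid := by
  refine lipschitzWith_of_nnnorm_deriv_le differentiable_sigmoid fun z ↦ ?_
  rw [← NNReal.coe_le_coe, coe_nnnorm, deriv_sigmoid, Real.norm_eq_abs, NNReal.coe_inv,
    NNReal.coe_ofNat, abs_of_nonneg (mul_nonneg (sigmoid_nonneg z) (by linarith [sigmoid_le_one z]))]
  nlinarith [sq_nonneg (sigmoid z - 2⁻¹)]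

theorem logistic_eq_sigmoid : logistic = Real.sigmoid :=
  funext fun z ↦ by rw [logistic, one_div, Real.sigmoid_def]

theorem abs_logistic_sub_logistic_le (a b : ℝ) : |logistic a - logistic b| ≤ |a - b| / 4 := by
  simpa [logistic_eq_sigmoid, Real.dist_eq, div_eq_inv_mul] using
    Real.lipschitzWith_sigmoid.dist_le_mul a b

section DistortionRate

variable {d : ℕ} (l01 l11 : ℝ)

theorem expLoss_one_sub_expLoss_zero (θ x : Fin d → ℝ) :
    expLoss l01 l11 1 θ x - expLoss l01 l11 0 θ x
      = 1 - (l01 - l11 + 1) * logistic (∑ i, x i * θ i) := by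
  simp only [expLoss, one_ne_zero, if_false, if_true]
  ring

theorem distRate_le_abs_sub (θ θ' x : Fin d → ℝ) :
    distRate l01 l11 θ θ' x ≤ |(expLoss l01 l11 1 θ' x - expLoss l01 l11 0 θ' x)
      - (expLoss l01 l11 1 θ x - expLoss l01 l11 0 θ x)| := by
  unfold distRate optAct
  split_ifs
  · rw [sub_self]; positivity
  · exact le_abs.mpr (Or.inl (by linarith))
  · exact le_abs.mpr (Or.inr (by linarith))
  · rw [sub_self]; positivity

theorem abs_sum_mul_sub_sum_mul_le {xmax : ℝ} {x : Fin d → ℝ} (hx : ∀ i, |x i| ≤ xmax)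
    (θ θ' : Fin d → ℝ) :
    |∑ i, x i * θ i - ∑ i, x i * θ' i| ≤ xmax * ∑ i, |θ i - θ' i| := by
  rw [← Finset.sum_sub_distrib, Finset.mul_sum]
  refine (Finset.abs_sum_le_sum_abs _ _).trans (Finset.sum_le_sum fun i _ ↦ ?_)
  rw [← mul_sub, abs_mul]
  exact mul_le_mul_of_nonneg_right (hx i) (abs_nonneg _)

theorem distRate_le_mul_sum_abs_sub {xmax : ℝ} {x : Fin d → ℝ} (hx : ∀ i, |x i| ≤ xmax)
    (θ θ' : Fin d → ℝ) :
    distRate l01 l11 θ θ' x ≤ |l01 - l11 + 1| / 4 * (xmax * ∑ i, |θ i - θ' i|) :=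
  calc distRate l01 l11 θ θ' x
      ≤ |l01 - l11 + 1| * |logistic (∑ i, x i * θ i) - logistic (∑ i, x i * θ' i)| := by
        have := distRate_le_abs_sub l01 l11 θ θ' x
        rwa [expLoss_one_sub_expLoss_zero, expLoss_one_sub_expLoss_zero, sub_sub_sub_cancel_left,
          ← mul_sub, abs_mul] at this
    _ ≤ |l01 - l11 + 1| * (|∑ i, x i * θ i - ∑ i, x i * θ' i| / 4) := by
        gcongr; exact abs_logistic_sub_logistic_le _ _
    _ = |l01 - l11 + 1| / 4 * |∑ i, x i * θ i - ∑ i, x i * θ' i| := by ring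
    _ ≤ |l01 - l11 + 1| / 4 * (xmax * ∑ i, |θ i - θ' i|) := by
        gcongr; exact abs_sum_mul_sub_sum_mul_le hx θ θ'

end DistortionRate

section Covering

variable {E : Type*} [NormedAddCommGroup E] [NormedSpace ℝ E] [FiniteDimensional ℝ E]

theorem Finset.card_le_of_pairwise_lt_dist_of_subset_closedBall {r : ℝ} (hr : 0 < r)
    {s : Finset E} (hs : (s : Set E) ⊆ closedBall 0 1)
    (hsep : (s : Set E).Pairwise fun x y ↦ r < dist x y) :
    (s.card : ℝ) ≤ (1 + 2 / r) ^ finrank ℝ E := by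
  borelize E
  set μ : Measure E := Measure.addHaar
  set d := finrank ℝ E
  have hdisj : (s : Set E).PairwiseDisjoint fun c ↦ ball c (r / 2) := fun c hc c' hc' hne ↦
    ball_disjoint_ball (by linarith [hsep hc hc' hne])
  have hunion : (⋃ c ∈ s, ball c (r / 2)) ⊆ ball 0 (1 + r / 2) := by
    refine iUnion₂_subset fun c hc ↦ ball_subset_ball' ?_
    linarith [mem_closedBall.mp (hs hc)]
  have hvol : (s.card : ENNReal) * ENNReal.ofReal ((r / 2) ^ d) * μ (ball 0 1)
      ≤ ENNReal.ofReal ((1 + r / 2) ^ d) * μ (ball 0 1) := by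
    calc (s.card : ENNReal) * ENNReal.ofReal ((r / 2) ^ d) * μ (ball 0 1)
        = μ (⋃ c ∈ s, ball c (r / 2)) := by
          rw [measure_biUnion_finset hdisj fun c _ ↦ measurableSet_ball]
          simp [d, μ.addHaar_ball_of_pos _ (half_pos hr), mul_assoc]
      _ ≤ μ (ball 0 (1 + r / 2)) := measure_mono hunion
      _ = ENNReal.ofReal ((1 + r / 2) ^ d) * μ (ball 0 1) :=
          μ.addHaar_ball_of_pos _ (by positivity)
  rw [ENNReal.mul_le_mul_iff_left (measure_ball_pos μ 0 one_pos).ne' measure_ball_lt_top.ne,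
    ← ENNReal.ofReal_natCast, ← ENNReal.ofReal_mul (by positivity),
    ENNReal.ofReal_le_ofReal_iff (by positivity)] at hvol
  calc (s.card : ℝ) ≤ (1 + r / 2) ^ d / (r / 2) ^ d := (le_div_iff₀ (by positivity)).mpr hvol
    _ = (1 + 2 / r) ^ d := by rw [← div_pow]; congr 1; field_simp; ring

theorem Metric.packingNumber_closedBall_le {r : ℝ≥0} (hr : 0 < r) :
    packingNumber r (closedBall (0 : E) 1) ≤ ⌊(1 + 2 / (r : ℝ)) ^ finrank ℝ E⌋₊ := by
  simp only [packingNumber, iSup_le_iff]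
  intro C hC hsep
  by_contra! hlt
  obtain ⟨t, htC, ht⟩ := exists_subset_encard_eq (Order.add_one_le_of_lt hlt)
  lift t to Finset E using finite_of_encard_eq_coe ht
  rw [encard_coe_eq_coe_finsetCard] at ht
  have hsep' : (t : Set E).Pairwise fun x y ↦ (r : ℝ) < dist x y := (hsep.mono htC).imp
    fun x y hxy ↦ by simpa [edist_dist] using hxy
  have hcard := Finset.card_le_of_pairwise_lt_dist_of_subset_closedBall hr (htC.trans hC) hsep'
  rw [show t.card = _ + 1 by exact_mod_cast ht, Nat.cast_succ] at hcard
  exact hcard.not_gt (Nat.lt_floor_add_one _)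

theorem Metric.exists_finset_closedBall_cover_card_le {r : ℝ} (hr : 0 < r) :
    ∃ C : Finset E, (C.card : ℝ) ≤ (1 + 2 / r) ^ finrank ℝ E ∧
      closedBall (0 : E) 1 ⊆ ⋃ c ∈ C, closedBall c r := by
  lift r to ℝ≥0 using hr.le
  have hcov := (coveringNumber_le_packingNumber r _).trans (packingNumber_closedBall_le (E := E) hr)
  obtain ⟨C, -, hCfin, hCcover, hCcard⟩ :=
    exists_set_encard_eq_coveringNumber (ne_top_of_le_ne_top (ENat.natCast_ne_top _) hcov)
  lift C to Finset E using hCfin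
  refine ⟨C, ?_, by simpa using isCover_iff_subset_iUnion_closedBall.mp hCcover⟩
  rw [← hCcard, encard_coe_eq_coe_finsetCard, Nat.cast_le] at hcov
  exact (Nat.cast_le.mpr hcov).trans (Nat.floor_le (by positivity))

end Covering

theorem exists_l1Ball_cover_card_le (d : ℕ) {r : ℝ} (hr0 : 0 < r) (hr3 : r ≤ 3) :
    ∃ (K : ℕ) (c : Fin K → Fin d → ℝ), (K : ℝ) ≤ (3 / r) ^ d ∧
      {θ : Fin d → ℝ | ∑ i, |θ i| ≤ 1} ⊆ ⋃ k, {θ | ∑ i, |θ i - c k i| ≤ r} := by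
  rcases le_or_gt r 1 with hr1 | hr1
  · obtain ⟨C, hcard, hcover⟩ :=
      exists_finset_closedBall_cover_card_le (E := PiLp 1 fun _ : Fin d ↦ ℝ) hr0
    refine ⟨C.card, fun k ↦ WithLp.ofLp (C.equivFin.symm k : PiLp 1 fun _ : Fin d ↦ ℝ), ?_, ?_⟩
    · rw [(WithLp.linearEquiv 1 ℝ (Fin d → ℝ)).finrank_eq, finrank_fin_fun] at hcard
      refine hcard.trans (pow_le_pow_left₀ (by positivity) ?_ d)
      rw [add_div' _ _ _ hr0.ne', div_le_div_iff_of_pos_right hr0]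
      linarith
    · intro θ hθ
      have hθ' : WithLp.toLp 1 θ ∈ closedBall 0 1 := by
        simpa [PiLp.norm_eq_of_L1] using hθ
      obtain ⟨c, hc, hθc⟩ := mem_iUnion₂.mp (hcover hθ')
      refine mem_iUnion.mpr ⟨C.equivFin ⟨c, hc⟩, ?_⟩
      simpa [PiLp.dist_eq_of_L1, Real.dist_eq] using hθc
  · refine ⟨1, fun _ ↦ 0, ?_, ?_⟩
    · rw [Nat.cast_one]
      exact one_le_pow₀ ((one_le_div hr0).mpr (by linarith))
    · intro θ hθ
      simpa using hθ.out.trans hr1.le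

theorem Set.exists_partition_subset_of_subset_iUnion {α ι : Type*} [LinearOrder ι]
    [LocallyFiniteOrderBot ι] {s : Set α} {t : ι → Set α} (h : s ⊆ ⋃ i, t i) :
    ∃ P : ι → Set α, (⋃ i, P i) = s ∧ Pairwise (Disjoint on P) ∧ ∀ i, P i ⊆ t i :=
  ⟨disjointed fun i ↦ s ∩ t i, by rw [iUnion_disjointed, ← inter_iUnion, inter_eq_left.mpr h],
    disjoint_disjointed _, fun i ↦ (disjointed_subset _ i).trans inter_subset_right⟩

theorem exists_partition_distRate_le_general
    (d : ℕ) (xmax : ℝ) (hx : 0 < xmax)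
    (l01 l11 : ℝ) (hlt : l11 < l01)
    (ε : ℝ) (hε0 : 0 < ε)
    (hε2 : ε ≤ 3 * max 1 (l01 - l11) * xmax) :
    ∃ (K : ℕ) (P : Fin K → Set (Fin d → ℝ)),
      (K : ℝ) ≤ (3 * max 1 (l01 - l11) * xmax / ε) ^ d ∧
      (⋃ k, P k) = {θ : Fin d → ℝ | ∑ i, |θ i| ≤ 1} ∧
      (∀ k k', k ≠ k' → Disjoint (P k) (P k')) ∧
      (∀ k, ∀ θ ∈ P k, ∀ θ' ∈ P k, ∀ x : Fin d → ℝ,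
        (∀ i, |x i| ≤ xmax) → distRate l01 l11 θ θ' x ≤ ε) := by
  set L := max 1 (l01 - l11)
  have hL : 0 < L := one_pos.trans_le (le_max_left _ _)
  have hLx : 0 < L * xmax := mul_pos hL hx
  set r := ε / (L * xmax)
  have hr0 : 0 < r := div_pos hε0 hLx
  have hr3 : r ≤ 3 := by rw [div_le_iff₀ hLx]; linarith
  have hrε : L * xmax * r = ε := mul_div_cancel₀ ε hLx.ne'
  obtain ⟨K, c, hK, hcover⟩ := exists_l1Ball_cover_card_le d hr0 hr3
  obtain ⟨P, hunion, hdisj, hPc⟩ := exists_partition_subset_of_subset_iUnion hcover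
  refine ⟨K, P, ?_, hunion, fun _ _ hne ↦ hdisj hne, ?_⟩
  · convert hK using 2
    rw [← hrε]
    field_simp
  intro k θ hθ θ' hθ' x hxi
  have hθθ' : ∑ i, |θ i - θ' i| ≤ 2 * r := by
    have := Finset.sum_le_sum fun i (_ : i ∈ Finset.univ) ↦ abs_sub_le (θ i) (c k i) (θ' i)
    simp_rw [Finset.sum_add_distrib, abs_sub_comm (c k _)] at this
    linarith [(hPc k hθ).out, (hPc k hθ').out]
  have hcL : |l01 - l11 + 1| / 4 ≤ L / 2 := by
    rw [abs_of_pos (by linarith)]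
    linarith [le_max_left 1 (l01 - l11), le_max_right 1 (l01 - l11)]
  calc distRate l01 l11 θ θ' x
      ≤ |l01 - l11 + 1| / 4 * (xmax * ∑ i, |θ i - θ' i|) := distRate_le_mul_sum_abs_sub _ _ hxi _ _
    _ ≤ L / 2 * (xmax * (2 * r)) := by gcongr
    _ = L * xmax * r := by ring
    _ = ε := hrε

/-- There is a finite partition of the ℓ1 unit ball `Θ ⊆ ℝ^d` of size at most
`(3·l_max·x_max/ε)^d` on whose cells the distortion rate is at most `ε`, uniformly over
contexts with `‖x‖_∞ ≤ x_max`. -/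
theorem exists_partition_distRate_le
    (d : ℕ) (hd : 1 ≤ d) (xmax : ℝ) (hx : 0 < xmax)
    (l01 l11 : ℝ) (h11 : 0 ≤ l11) (hlt : l11 < l01)
    (ε : ℝ) (hε0 : 0 < ε) (hε1 : ε < min 1 (l01 - l11))
    (hε2 : ε ≤ 3 * max 1 (l01 - l11) * xmax) :
    ∃ (K : ℕ) (P : Fin K → Set (Fin d → ℝ)),
      (K : ℝ) ≤ (3 * max 1 (l01 - l11) * xmax / ε) ^ d ∧
      (⋃ k, P k) = {θ : Fin d → ℝ | ∑ i, |θ i| ≤ 1} ∧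
      (∀ k k', k ≠ k' → Disjoint (P k) (P k')) ∧
      (∀ k, ∀ θ ∈ P k, ∀ θ' ∈ P k, ∀ x : Fin d → ℝ,
        (∀ i, |x i| ≤ xmax) → distRate l01 l11 θ θ' x ≤ ε) :=
  exists_partition_distRate_le_general d xmax hx l01 l11 hlt ε hε0 hε2
end

section
/- Fix loss parameters l01, l11 ∈ ℝ with 0 ≤ l11 < l01, set c = l01 − l11, and let ε satisfy 0 < ε < min(1, c). For all θ, θ', x ∈ ℝ^d, if |xᵀθ − xᵀθ'| ≤ log(1 + ε/min(1,c)) − log(1 − ε/max(1,c)), then d(θ, θ'; x) ≤ ε. -/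
/-!
Write `u = exp (-xᵀθ)` and `u' = exp (-xᵀθ')`. Since `σ(z) = 1/(1 + exp (-z))`, the gap
`μ(1) - μ(0)` equals `(u - c)/(1 + u)`, so the optimal action is `1` exactly when `u ≤ c`. The
distortion vanishes when both parameters choose the same action; otherwise it is
`±(u' - c)/(1 + u')` with `u` on the other side of `c`. The hypothesis bounds `u'/u` and `u/u'` by
`R = (1 + ε/min(1,c))/(1 - ε/max(1,c))`, and `R` is at most both thresholds
`(1 + ε/c)/(1 - ε)` and `(1 + ε)/(1 - ε/c)` at which the two kinds of disagreement cost `ε`.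
-/

open Real

section OddsBounds

variable {c u u' R ε : ℝ}

theorem sub_div_one_add_le_of_le (hε : ε ≤ 1) (hR : 0 ≤ R) (hu' : 0 < u') (hu : u ≤ c)
    (hu'u : u' ≤ R * u) (hRc : R * c * (1 - ε) ≤ c + ε) :
    (u' - c) / (1 + u') ≤ ε := by
  rw [div_le_iff₀ (by linarith)]
  have : u' * (1 - ε) ≤ R * c * (1 - ε) :=
    mul_le_mul_of_nonneg_right (hu'u.trans (mul_le_mul_of_nonneg_left hu hR)) (by linarith)
  linarith

theorem sub_div_one_add_le_of_lt (hε : 0 ≤ ε) (hR : 0 < R) (hu' : 0 < u') (hu : c < u)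
    (huu' : u ≤ R * u') (hRc : R * (c - ε) ≤ c * (1 + ε)) :
    (c - u') / (1 + u') ≤ ε := by
  rw [div_le_iff₀ (by linarith)]
  have h1ε : 0 ≤ 1 + ε := by linarith
  have : R * (c - ε) ≤ R * (u' * (1 + ε)) :=
    calc R * (c - ε) ≤ c * (1 + ε) := hRc
      _ ≤ u * (1 + ε) := by gcongr
      _ ≤ R * u' * (1 + ε) := by gcongr
      _ = R * (u' * (1 + ε)) := by ring
  linarith [le_of_mul_le_mul_left this hR]

end OddsBounds

noncomputable def oddsRatioBound (c ε : ℝ) : ℝ := (1 + ε / min 1 c) / (1 - ε / max 1 c)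

section OddsRatioBound

variable {c ε : ℝ}

theorem one_sub_div_max_pos (hε : ε < min 1 c) : 0 < 1 - ε / max 1 c := by
  rw [sub_pos, div_lt_one (by positivity)]
  exact (hε.trans_le (min_le_left _ _)).trans_le (le_max_left _ _)

theorem one_add_div_min_pos (hc : 0 < c) (hε : 0 ≤ ε) : 0 < 1 + ε / min 1 c := by
  have := lt_min one_pos hc
  positivity

theorem oddsRatioBound_pos (hc : 0 < c) (hε0 : 0 ≤ ε) (hε : ε < min 1 c) :
    0 < oddsRatioBound c ε :=
  div_pos (one_add_div_min_pos hc hε0) (one_sub_div_max_pos hε)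

theorem log_oddsRatioBound (hc : 0 < c) (hε0 : 0 ≤ ε) (hε : ε < min 1 c) :
    log (oddsRatioBound c ε) = log (1 + ε / min 1 c) - log (1 - ε / max 1 c) :=
  log_div (one_add_div_min_pos hc hε0).ne' (one_sub_div_max_pos hε).ne'

theorem oddsRatioBound_mul_mul_one_sub_le (hc : 0 < c) (hε : ε < min 1 c) :
    oddsRatioBound c ε * c * (1 - ε) ≤ c + ε := by
  have hR := one_sub_div_max_pos hε
  rw [oddsRatioBound]
  rcases le_total c 1 with hc1 | hc1
  · rw [min_eq_right hc1, max_eq_left hc1, div_one] at *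
    rw [div_mul_eq_mul_div, div_mul_eq_mul_div, div_le_iff₀ hR]
    field_simp
    rfl
  · rw [min_eq_left hc1, max_eq_right hc1] at *
    rw [div_mul_eq_mul_div, div_mul_eq_mul_div, div_le_iff₀ hR]
    field_simp
    nlinarith [mul_le_mul_of_nonneg_left (one_le_mul_of_one_le_of_one_le hc1 hc1) (sq_nonneg ε)]

theorem oddsRatioBound_mul_sub_le (hc : 0 < c) (hε : ε < min 1 c) :
    oddsRatioBound c ε * (c - ε) ≤ c * (1 + ε) := by
  have hR := one_sub_div_max_pos hε
  rw [oddsRatioBound]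
  rcases le_total c 1 with hc1 | hc1
  · rw [min_eq_right hc1, max_eq_left hc1] at *
    rw [div_mul_eq_mul_div, div_le_iff₀ hR]
    field_simp
    nlinarith [mul_le_mul_of_nonneg_left (mul_le_one₀ hc1 hc.le hc1) (sq_nonneg ε)]
  · rw [min_eq_left hc1, max_eq_right hc1] at *
    rw [div_mul_eq_mul_div, div_le_iff₀ hR]
    field_simp
    rfl

end OddsRatioBound

theorem exp_neg_le_mul_exp_neg {a b R : ℝ} (hR : 0 < R) (h : |a - b| ≤ log R) :
    exp (-b) ≤ R * exp (-a) := by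
  calc exp (-b) = exp (a - b) * exp (-a) := by rw [← exp_add]; ring_nf
    _ ≤ R * exp (-a) := by
      gcongr
      rw [← exp_log hR]
      exact exp_le_exp.2 ((le_abs_self _).trans h)

section DistortionRate

variable {d : ℕ} {l01 l11 : ℝ} {θ θ' x : Fin d → ℝ}

theorem expLoss_one_sub_expLoss_zero_s12 :
    expLoss l01 l11 1 θ x - expLoss l01 l11 0 θ x =
      (exp (-(x ⬝ᵥ θ)) - (l01 - l11)) / (1 + exp (-(x ⬝ᵥ θ))) := by
  rw [expLoss, expLoss, if_neg one_ne_zero, if_pos rfl, logistic, ← dotProduct]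
  field_simp
  ring

theorem expLoss_one_le_expLoss_zero_iff :
    expLoss l01 l11 1 θ x ≤ expLoss l01 l11 0 θ x ↔ exp (-(x ⬝ᵥ θ)) ≤ l01 - l11 := by
  rw [← sub_nonpos, expLoss_one_sub_expLoss_zero_s12,
    div_le_iff₀ (by positivity), zero_mul, sub_nonpos]

theorem optAct_eq_one_iff : optAct l01 l11 θ x = 1 ↔ exp (-(x ⬝ᵥ θ)) ≤ l01 - l11 := by
  rw [optAct, ← expLoss_one_le_expLoss_zero_iff]
  split_ifs with h <;> simp [h]

theorem optAct_eq_zero_iff : optAct l01 l11 θ x = 0 ↔ l01 - l11 < exp (-(x ⬝ᵥ θ)) := by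
  rw [optAct, ← not_le, ← expLoss_one_le_expLoss_zero_iff]
  split_ifs with h <;> simp [h]

theorem distRate_eq_zero_of_optAct_eq (h : optAct l01 l11 θ x = optAct l01 l11 θ' x) :
    distRate l01 l11 θ θ' x = 0 := by
  rw [distRate, h, sub_self]

theorem distRate_eq_of_le_of_lt (hu : exp (-(x ⬝ᵥ θ)) ≤ l01 - l11)
    (hu' : l01 - l11 < exp (-(x ⬝ᵥ θ'))) :
    distRate l01 l11 θ θ' x = (exp (-(x ⬝ᵥ θ')) - (l01 - l11)) / (1 + exp (-(x ⬝ᵥ θ'))) := by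
  rw [distRate, optAct_eq_one_iff.2 hu, optAct_eq_zero_iff.2 hu', expLoss_one_sub_expLoss_zero_s12]

theorem distRate_eq_of_lt_of_le (hu : l01 - l11 < exp (-(x ⬝ᵥ θ)))
    (hu' : exp (-(x ⬝ᵥ θ')) ≤ l01 - l11) :
    distRate l01 l11 θ θ' x = (l01 - l11 - exp (-(x ⬝ᵥ θ'))) / (1 + exp (-(x ⬝ᵥ θ'))) := by
  rw [distRate, optAct_eq_zero_iff.2 hu, optAct_eq_one_iff.2 hu', ← neg_sub,
    expLoss_one_sub_expLoss_zero_s12, ← neg_div, neg_sub]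

end DistortionRate

theorem distRate_le_of_dot_close_general
    (d : ℕ) (l01 l11 : ℝ) (hlt : l11 < l01)
    (ε : ℝ) (hε0 : 0 < ε) (hε1 : ε < min 1 (l01 - l11))
    (θ θ' x : Fin d → ℝ)
    (h : |(∑ i, x i * θ i) - ∑ i, x i * θ' i| ≤
      Real.log (1 + ε / min 1 (l01 - l11)) -
        Real.log (1 - ε / max 1 (l01 - l11))) :
    distRate l01 l11 θ θ' x ≤ ε := by
  have hc : 0 < l01 - l11 := sub_pos.2 hlt
  have hR := oddsRatioBound_pos hc hε0.le hε1
  rw [← log_oddsRatioBound hc hε0.le hε1] at h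
  have hu'u := exp_neg_le_mul_exp_neg hR h
  have huu' := exp_neg_le_mul_exp_neg hR (abs_sub_comm (x ⬝ᵥ θ) _ ▸ h)
  rcases le_or_gt (exp (-(x ⬝ᵥ θ))) (l01 - l11) with hu | hu <;>
    rcases le_or_gt (exp (-(x ⬝ᵥ θ'))) (l01 - l11) with hu' | hu'
  · rw [distRate_eq_zero_of_optAct_eq (by rw [optAct_eq_one_iff.2 hu, optAct_eq_one_iff.2 hu'])]
    exact hε0.le
  · rw [distRate_eq_of_le_of_lt hu hu']
    exact sub_div_one_add_le_of_le (hε1.le.trans (min_le_left _ _)) hR.le (exp_pos _) hu hu'u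
      (oddsRatioBound_mul_mul_one_sub_le hc hε1)
  · rw [distRate_eq_of_lt_of_le hu hu']
    exact sub_div_one_add_le_of_lt hε0.le hR (exp_pos _) hu huu' (oddsRatioBound_mul_sub_le hc hε1)
  · rw [distRate_eq_zero_of_optAct_eq (by rw [optAct_eq_zero_iff.2 hu, optAct_eq_zero_iff.2 hu'])]
    exact hε0.le

/-- If `|xᵀθ − xᵀθ'|` is at most
`log(1 + ε/min(1,c)) − log(1 − ε/max(1,c))` with `c = l01 − l11`, then `d(θ,θ';x) ≤ ε`. -/
theorem distRate_le_of_dot_close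
    (d : ℕ) (l01 l11 : ℝ) (h11 : 0 ≤ l11) (hlt : l11 < l01)
    (ε : ℝ) (hε0 : 0 < ε) (hε1 : ε < min 1 (l01 - l11))
    (θ θ' x : Fin d → ℝ)
    (h : |(∑ i, x i * θ i) - ∑ i, x i * θ' i| ≤
      Real.log (1 + ε / min 1 (l01 - l11)) -
        Real.log (1 - ε / max 1 (l01 - l11))) :
    distRate l01 l11 θ θ' x ≤ ε :=
  distRate_le_of_dot_close_general d l01 l11 hlt ε hε0 hε1 θ θ' x h
end

section
/- Let I > 0, Δ0 > 0, and Δ1 ≥ 0 with Δ1 ≠ Δ0. Define Ψ(p) = (p·Δ1 + (1−p)·Δ0)² / (p·I) for p ∈ (0,1]. Then Ψ attains its minimum over (0,1] at the unique point p̃ = min(1, Δ0/|Δ1 − Δ0|); that is, Ψ(p̃) ≤ Ψ(p) for all p ∈ (0,1], with strict inequality for every p ≠ p̃. -/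
/-!
Writing `d = Δ1 - Δ0`, the numerator is `(Δ0 + p d)²`, and clearing denominators gives
`Ψ(p) - Ψ(q) = (p - q) (d² p q - Δ0²) / (p q I)`. At `q = Δ0/|d| ≤ 1` the second factor is
`|d| Δ0 (p - q)`, so the product is a positive multiple of `(p - q)²`; when `Δ0/|d| > 1`
and `q = 1`, both factors are negative for `p < 1` because `d² p < d² ≤ Δ0²`.
-/

open Set

noncomputable def idsObjective (I Δ0 Δ1 p : ℝ) : ℝ :=
  (p * Δ1 + (1 - p) * Δ0) ^ 2 / (p * I)

theorem idsObjective_sub {I Δ0 Δ1 p q : ℝ} (hI : I ≠ 0) (hp : p ≠ 0) (hq : q ≠ 0) :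
    idsObjective I Δ0 Δ1 p - idsObjective I Δ0 Δ1 q =
      (p - q) * ((Δ1 - Δ0) ^ 2 * p * q - Δ0 ^ 2) / (p * q * I) := by
  unfold idsObjective
  field_simp
  ring

theorem idsObjective_lt_of_pos {I Δ0 Δ1 p q : ℝ} (hI : 0 < I) (hp : 0 < p) (hq : 0 < q)
    (h : 0 < (p - q) * ((Δ1 - Δ0) ^ 2 * p * q - Δ0 ^ 2)) :
    idsObjective I Δ0 Δ1 q < idsObjective I Δ0 Δ1 p := by
  rw [← sub_pos, idsObjective_sub hI.ne' hp.ne' hq.ne']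
  positivity

theorem min_one_div_abs_mem_Ioc {a d : ℝ} (ha : 0 < a) (hd : d ≠ 0) :
    min 1 (a / |d|) ∈ Ioc (0 : ℝ) 1 :=
  ⟨lt_min one_pos (div_pos ha (abs_pos.mpr hd)), min_le_left _ _⟩

theorem sub_mul_sub_pos_of_ne_min_one_div_abs {a d p : ℝ} (ha : 0 < a) (hd : d ≠ 0)
    (hp : p ∈ Ioc (0 : ℝ) 1) (hpq : p ≠ min 1 (a / |d|)) :
    0 < (p - min 1 (a / |d|)) * (d ^ 2 * p * min 1 (a / |d|) - a ^ 2) := by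
  have hd' : 0 < |d| := abs_pos.mpr hd
  rcases le_total (a / |d|) 1 with hq | hq
  · rw [min_eq_right hq] at hpq ⊢
    have hfactor : (p - a / |d|) * (d ^ 2 * p * (a / |d|) - a ^ 2) =
        a * |d| * (p - a / |d|) ^ 2 := by
      rw [← sq_abs d]
      field_simp
    rw [hfactor]
    have := sq_pos_of_ne_zero (sub_ne_zero.mpr hpq)
    positivity
  · rw [min_eq_left hq] at hpq ⊢
    have hp1 : p < 1 := lt_of_le_of_ne hp.2 hpq
    have hda : d ^ 2 ≤ a ^ 2 := by
      rw [← sq_abs d]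
      exact pow_le_pow_left₀ hd'.le ((one_le_div hd').mp hq) 2
    have hd2 : 0 < d ^ 2 := sq_pos_of_ne_zero hd
    nlinarith [mul_pos (sub_pos.mpr hp1) hd2]

theorem traditional_IDS_min_general (I Δ0 Δ1 : ℝ)
    (hI : 0 < I) (hΔ0 : 0 < Δ0) (hne : Δ1 ≠ Δ0) :
    min 1 (Δ0 / |Δ1 - Δ0|) ∈ Set.Ioc (0 : ℝ) 1 ∧
    ∀ p ∈ Set.Ioc (0 : ℝ) 1,
      (min 1 (Δ0 / |Δ1 - Δ0|) * Δ1 + (1 - min 1 (Δ0 / |Δ1 - Δ0|)) * Δ0) ^ 2 /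
          (min 1 (Δ0 / |Δ1 - Δ0|) * I)
        ≤ (p * Δ1 + (1 - p) * Δ0) ^ 2 / (p * I) ∧
      (p ≠ min 1 (Δ0 / |Δ1 - Δ0|) →
        (min 1 (Δ0 / |Δ1 - Δ0|) * Δ1 + (1 - min 1 (Δ0 / |Δ1 - Δ0|)) * Δ0) ^ 2 /
            (min 1 (Δ0 / |Δ1 - Δ0|) * I)
          < (p * Δ1 + (1 - p) * Δ0) ^ 2 / (p * I)) := by
  have hd : Δ1 - Δ0 ≠ 0 := sub_ne_zero.mpr hne
  have hq := min_one_div_abs_mem_Ioc hΔ0 hd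
  have hlt : ∀ p ∈ Ioc (0 : ℝ) 1, p ≠ min 1 (Δ0 / |Δ1 - Δ0|) →
      idsObjective I Δ0 Δ1 (min 1 (Δ0 / |Δ1 - Δ0|)) < idsObjective I Δ0 Δ1 p :=
    fun p hp hpq => idsObjective_lt_of_pos hI hp.1 hq.1
      (sub_mul_sub_pos_of_ne_min_one_div_abs hΔ0 hd hp hpq)
  refine ⟨hq, fun p hp => ⟨?_, hlt p hp⟩⟩
  rcases eq_or_ne p (min 1 (Δ0 / |Δ1 - Δ0|)) with rfl | hpq
  · exact le_rfl
  · exact (hlt p hp hpq).le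

/-- The traditional IDS objective `Ψ(p) = (p·Δ1 + (1−p)·Δ0)²/(p·I)` attains
its minimum over `(0,1]` uniquely at `p̃ = min(1, Δ0/|Δ1 − Δ0|)`. -/
theorem traditional_IDS_min (I Δ0 Δ1 : ℝ)
    (hI : 0 < I) (hΔ0 : 0 < Δ0) (hΔ1 : 0 ≤ Δ1) (hne : Δ1 ≠ Δ0) :
    min 1 (Δ0 / |Δ1 - Δ0|) ∈ Set.Ioc (0 : ℝ) 1 ∧
    ∀ p ∈ Set.Ioc (0 : ℝ) 1,
      (min 1 (Δ0 / |Δ1 - Δ0|) * Δ1 + (1 - min 1 (Δ0 / |Δ1 - Δ0|)) * Δ0) ^ 2 /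
          (min 1 (Δ0 / |Δ1 - Δ0|) * I)
        ≤ (p * Δ1 + (1 - p) * Δ0) ^ 2 / (p * I) ∧
      (p ≠ min 1 (Δ0 / |Δ1 - Δ0|) →
        (min 1 (Δ0 / |Δ1 - Δ0|) * Δ1 + (1 - min 1 (Δ0 / |Δ1 - Δ0|)) * Δ0) ^ 2 /
            (min 1 (Δ0 / |Δ1 - Δ0|) * I)
          < (p * Δ1 + (1 - p) * Δ0) ^ 2 / (p * I)) :=
  traditional_IDS_min_general I Δ0 Δ1 hI hΔ0 hne
end
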